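/- arXiv:1503.06444 — 2 statements merged into one kernel-verified Lean document; each statement's English description precedes it below -/
import Mathlib

section
/- Let F be a field of characteristic 0 and let q1, q2 be quadratic forms on F^4. Define quadratic forms Q1 and Q2 on F^7 (coordinates x1,…,x7) by Q1(x1,…,x7) = q1(x1,x2,x3,x4) + x5·x6 and Q2(x1,…,x7) = q2(x1,x2,x3,x4) + x5·x7. Then there exists a 3-dimensional F-linear subspace of F^7 on which both Q1 and Q2 vanish identically if and only if there exists a nonzero vector v ∈ F^4 with q1(v) = 0 and q2(v) = 0. -/
/-!
Split `F⁷ = F⁴ × F³` and let `W` be a common totally isotropic `3`-space of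
`Q₁ = q₁ + x₅x₆` and `Q₂ = q₂ + x₅x₇`. If the projection `W → F³` has a nonzero kernel vector
`(v, 0, 0, 0)`, then `v` is a common zero of `q₁, q₂`. Otherwise the projection is onto, and
a preimage `(u, 1, 0, 0)` of `e₁` gives `q₁ u = q₂ u = 0`. If `u` were `0`, a preimage
`(u', 0, 1, 0)` of `e₂` would have `q₁ u' = 0`, so the sum `(u', 1, 1, 0) ∈ W` would have
`Q₁ = 1`. Conversely a common zero `v` spans the common totally isotropic space `F v × 0 × F × F`.
-/

/-- Given a quadratic form `q1` on `F^4`, the quadratic form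
`Q1(x1,…,x7) = q1(x1,x2,x3,x4) + x5·x6` on `F^7` (indices are 0-based below). -/
noncomputable def amerFormFst7 {F : Type*} [Field F] (q1 : QuadraticForm F (Fin 4 → F)) :
    QuadraticForm F (Fin 7 → F) :=
  q1.comp (LinearMap.funLeft F F (Fin.castLE (by omega))) +
    QuadraticMap.proj (R := F) (A := F) (4 : Fin 7) 5

/-- Given a quadratic form `q2` on `F^4`, the quadratic form
`Q2(x1,…,x7) = q2(x1,x2,x3,x4) + x5·x7` on `F^7` (indices are 0-based below). -/
noncomputable def amerFormSnd7 {F : Type*} [Field F] (q2 : QuadraticForm F (Fin 4 → F)) :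
    QuadraticForm F (Fin 7 → F) :=
  q2.comp (LinearMap.funLeft F F (Fin.castLE (by omega))) +
    QuadraticMap.proj (R := F) (A := F) (4 : Fin 7) 6

namespace QuadraticForm

variable {F E E' V : Type*} [Field F] [AddCommGroup E] [Module F E] [AddCommGroup E'] [Module F E']
  [AddCommGroup V] [Module F V]

def HasCommonTotallyIsotropicSubspace (Q₁ Q₂ : QuadraticForm F E) (k : ℕ) : Prop :=
  ∃ W : Submodule F E, Module.finrank F W = k ∧ ∀ x ∈ W, Q₁ x = 0 ∧ Q₂ x = 0

theorem hasCommonTotallyIsotropicSubspace_comp_iff (e : E ≃ₗ[F] E') (Q₁ Q₂ : QuadraticForm F E')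
    (k : ℕ) :
    HasCommonTotallyIsotropicSubspace (Q₁.comp (e : E →ₗ[F] E')) (Q₂.comp e) k ↔
      HasCommonTotallyIsotropicSubspace Q₁ Q₂ k := by
  constructor
  · rintro ⟨W, hW, hiso⟩
    refine ⟨W.map (e : E →ₗ[F] E'), by rw [e.finrank_map_eq, hW], ?_⟩
    rintro _ ⟨x, hx, rfl⟩
    exact hiso x hx
  · rintro ⟨W, hW, hiso⟩
    refine ⟨W.map (e.symm : E' →ₗ[F] E), by rw [e.symm.finrank_map_eq, hW], ?_⟩
    rintro _ ⟨x, hx, rfl⟩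
    simpa using hiso x hx

noncomputable def amerFormFst (q : QuadraticForm F V) : QuadraticForm F (V × F × F × F) :=
  q.comp (LinearMap.fst F V _) +
    QuadraticMap.linMulLin ((LinearMap.fst F F _).comp (LinearMap.snd F V _))
      ((LinearMap.fst F F F).comp ((LinearMap.snd F F _).comp (LinearMap.snd F V _)))

noncomputable def amerFormSnd (q : QuadraticForm F V) : QuadraticForm F (V × F × F × F) :=
  q.comp (LinearMap.fst F V _) +
    QuadraticMap.linMulLin ((LinearMap.fst F F _).comp (LinearMap.snd F V _))
      ((LinearMap.snd F F F).comp ((LinearMap.snd F F _).comp (LinearMap.snd F V _)))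

@[simp]
theorem amerFormFst_apply (q : QuadraticForm F V) (v : V) (a b c : F) :
    amerFormFst q (v, a, b, c) = q v + a * b := rfl

@[simp]
theorem amerFormSnd_apply (q : QuadraticForm F V) (v : V) (a b c : F) :
    amerFormSnd q (v, a, b, c) = q v + a * c := rfl

section Amer

variable {q₁ q₂ : QuadraticForm F V} {W : Submodule F (V × F × F × F)}

theorem exists_common_zero_of_not_injective
    (hW : ∀ x ∈ W, amerFormFst q₁ x = 0 ∧ amerFormSnd q₂ x = 0)
    (hinj : ¬ Function.Injective ((LinearMap.snd F V (F × F × F)).domRestrict W)) :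
    ∃ v : V, v ≠ 0 ∧ q₁ v = 0 ∧ q₂ v = 0 := by
  rw [← LinearMap.ker_eq_bot, ← ne_eq, Submodule.ne_bot_iff] at hinj
  obtain ⟨⟨⟨v, a, b, c⟩, hx⟩, hker, hne⟩ := hinj
  obtain ⟨rfl, rfl, rfl⟩ : a = 0 ∧ b = 0 ∧ c = 0 := by simpa using hker
  refine ⟨v, fun hv ↦ hne (by simp [hv]), ?_⟩
  simpa using hW _ hx

theorem exists_common_zero_of_surjective
    (hW : ∀ x ∈ W, amerFormFst q₁ x = 0 ∧ amerFormSnd q₂ x = 0)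
    (hsurj : Function.Surjective ((LinearMap.snd F V (F × F × F)).domRestrict W)) :
    ∃ v : V, v ≠ 0 ∧ q₁ v = 0 ∧ q₂ v = 0 := by
  obtain ⟨⟨⟨u, a, b, c⟩, hu⟩, h⟩ := hsurj (1, 0, 0)
  obtain ⟨rfl, rfl, rfl⟩ : a = 1 ∧ b = 0 ∧ c = 0 := by simpa using h
  obtain ⟨⟨⟨u', a', b', c'⟩, hu'⟩, h'⟩ := hsurj (0, 1, 0)
  obtain ⟨rfl, rfl, rfl⟩ : a' = 0 ∧ b' = 1 ∧ c' = 0 := by simpa using h'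
  refine ⟨u, fun hu0 ↦ ?_, by simpa using hW _ hu⟩
  subst hu0
  have hq₁u' : q₁ u' = 0 := by simpa using (hW _ hu').1
  simpa [hq₁u'] using (hW _ (W.add_mem hu hu')).1

theorem exists_common_zero_of_hasCommonTotallyIsotropicSubspace
    (h : HasCommonTotallyIsotropicSubspace (amerFormFst q₁) (amerFormSnd q₂) 3) :
    ∃ v : V, v ≠ 0 ∧ q₁ v = 0 ∧ q₂ v = 0 := by
  obtain ⟨W, hdim, hW⟩ := h
  by_cases hinj : Function.Injective ((LinearMap.snd F V (F × F × F)).domRestrict W)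
  · have : FiniteDimensional F W := Module.finite_of_finrank_pos (by omega)
    refine exists_common_zero_of_surjective hW ?_
    exact (LinearMap.injective_iff_surjective_of_finrank_eq_finrank (by simp [hdim])).1 hinj
  · exact exists_common_zero_of_not_injective hW hinj

theorem hasCommonTotallyIsotropicSubspace_of_common_zero {v : V} (hv : v ≠ 0) (h₁ : q₁ v = 0)
    (h₂ : q₂ v = 0) :
    HasCommonTotallyIsotropicSubspace (amerFormFst q₁) (amerFormSnd q₂) 3 := by
  set M := (LinearMap.toSpanSingleton F V v).prodMap (LinearMap.inr F F (F × F))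
  have hM : Function.Injective M :=
    (smul_left_injective F hv).prodMap LinearMap.inr_injective
  refine ⟨LinearMap.range M, by simp [LinearMap.finrank_range_of_inj hM], ?_⟩
  rintro _ ⟨⟨s, b, c⟩, rfl⟩
  simp [M, QuadraticMap.map_smul, h₁, h₂]

theorem hasCommonTotallyIsotropicSubspace_amerForm_iff :
    HasCommonTotallyIsotropicSubspace (amerFormFst q₁) (amerFormSnd q₂) 3 ↔
      ∃ v : V, v ≠ 0 ∧ q₁ v = 0 ∧ q₂ v = 0 :=
  ⟨exists_common_zero_of_hasCommonTotallyIsotropicSubspace,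
    fun ⟨_, hv, h₁, h₂⟩ ↦ hasCommonTotallyIsotropicSubspace_of_common_zero hv h₁ h₂⟩

end Amer

end QuadraticForm

open QuadraticForm

def finSevenEquivProd (F : Type*) [Field F] : (Fin 7 → F) ≃ₗ[F] (Fin 4 → F) × F × F × F where
  toFun x := (fun i ↦ x (Fin.castLE (by omega) i), x 4, x 5, x 6)
  invFun y := ![y.1 0, y.1 1, y.1 2, y.1 3, y.2.1, y.2.2.1, y.2.2.2]
  map_add' _ _ := rfl
  map_smul' _ _ := rfl
  left_inv x := by ext i; fin_cases i <;> rfl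
  right_inv y := by ext i <;> (try fin_cases i) <;> rfl

theorem amerFormFst7_eq_comp {F : Type*} [Field F] (q : QuadraticForm F (Fin 4 → F)) :
    amerFormFst7 q = (amerFormFst q).comp (finSevenEquivProd F : (Fin 7 → F) →ₗ[F] _) := rfl

theorem amerFormSnd7_eq_comp {F : Type*} [Field F] (q : QuadraticForm F (Fin 4 → F)) :
    amerFormSnd7 q = (amerFormSnd q).comp (finSevenEquivProd F : (Fin 7 → F) →ₗ[F] _) := rfl

theorem amer_subspace_seven_iff_common_zero_general (F : Type*) [Field F]
    (q1 q2 : QuadraticForm F (Fin 4 → F)) :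
    (∃ W : Submodule F (Fin 7 → F), Module.finrank F ↥W = 3 ∧
        ∀ x ∈ W, amerFormFst7 q1 x = 0 ∧ amerFormSnd7 q2 x = 0) ↔
      ∃ v : Fin 4 → F, v ≠ 0 ∧ q1 v = 0 ∧ q2 v = 0 := by
  change HasCommonTotallyIsotropicSubspace (amerFormFst7 q1) (amerFormSnd7 q2) 3 ↔ _
  rw [amerFormFst7_eq_comp, amerFormSnd7_eq_comp, hasCommonTotallyIsotropicSubspace_comp_iff,
    hasCommonTotallyIsotropicSubspace_amerForm_iff]

/-- Let `F` be a field of characteristic `0` and `q1`, `q2` quadratic forms on `F^4`. The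
forms `Q1 = q1(x1,…,x4) + x5 x6` and `Q2 = q2(x1,…,x4) + x5 x7` on `F^7` vanish identically
on a common `3`-dimensional linear subspace of `F^7` iff `q1` and `q2` have a common
nontrivial zero in `F^4`. -/
theorem amer_subspace_seven_iff_common_zero (F : Type*) [Field F] [CharZero F]
    (q1 q2 : QuadraticForm F (Fin 4 → F)) :
    (∃ W : Submodule F (Fin 7 → F), Module.finrank F ↥W = 3 ∧
        ∀ x ∈ W, amerFormFst7 q1 x = 0 ∧ amerFormSnd7 q2 x = 0) ↔
      ∃ v : Fin 4 → F, v ≠ 0 ∧ q1 v = 0 ∧ q2 v = 0 :=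
  amer_subspace_seven_iff_common_zero_general F q1 q2
end

section
/- Let q1, q2 be quadratic forms on ℚ^4 such that: (i) for every prime p there exists a nonzero vector v ∈ ℚ_p^4 with q1(v) = q2(v) = 0 (after base change to ℚ_p), (ii) there exists a nonzero vector v ∈ ℝ^4 with q1(v) = q2(v) = 0 (after base change to ℝ), and (iii) there is no nonzero vector v ∈ ℚ^4 with q1(v) = q2(v) = 0. Define Q1, Q2 on coordinates x1,…,x7 by Q1 = q1(x1,…,x4) + x5·x6 and Q2 = q2(x1,…,x4) + x5·x7. Then for every prime p there is a 3-dimensional ℚ_p-linear subspace of ℚ_p^7 on which Q1 and Q2 both vanish identically, and there is a 3-dimensional ℝ-linear subspace of ℝ^7 on which Q1 and Q2 both vanish identically, but there is no 3-dimensional ℚ-linear subspace of ℚ^7 on which Q1 and Q2 both vanish identically. (Hence the local-global principle for 3-dimensional vanishing subspaces can fail when no member of the pencil is nonsingular.) -/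
/-!
A common nonzero zero `v` of `q1` and `q2` over a field makes `Q1` and `Q2` vanish on the span of
`(v, 0, 0, 0)`, `e₆` and `e₇`; base change commutes with the construction of `Q1`, `Q2`, so this
gives the subspaces over `ℚ_p` and `ℝ`. Conversely, let `Q1`, `Q2` vanish on a `3`-dimensional
`W ⊆ ℚ^7`. For `x ∈ W` with `x₅ = 0` the vector `(x₁, …, x₄)` is a common zero of `q1`, `q2`,
hence zero. As `dim W = 3`, `W` contains a nonzero `z` with `z₅ = z₇ = 0`, forcing `z₆ ≠ 0`, and a
nonzero `w` with `w₆ = w₇ = 0`, forcing `w₅ ≠ 0`. But then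
`Q1 (w + z) = Q1 w + Q1 z + w₅ z₆` with all three values of `Q1` zero.
-/

/-- The base change of a quadratic form on `K^m` along a field homomorphism `σ : K →+* L`,
obtained by applying `σ` entrywise to the Gram matrix of the form. -/
noncomputable def QuadraticForm.mapBase {K L : Type*} [Field K] [Field L] [Invertible (2 : K)]
    {m : ℕ} (σ : K →+* L) (q : QuadraticForm K (Fin m → K)) :
    QuadraticForm L (Fin m → L) :=
  ((QuadraticMap.toMatrix' q).map σ).toQuadraticMap'

/-- The quadratic forms `f` and `g` both vanish identically on some `d`-dimensional
linear subspace of `L^m`. -/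
def BothVanishOnSubspace {L : Type*} [Field L] {m : ℕ}
    (f g : QuadraticForm L (Fin m → L)) (d : ℕ) : Prop :=
  ∃ W : Submodule L (Fin m → L), Module.finrank L ↥W = d ∧ ∀ x ∈ W, f x = 0 ∧ g x = 0

namespace Matrix

variable {R : Type*} [CommRing R] {m n : Type*} [Fintype m] [DecidableEq m] [Fintype n]
  [DecidableEq n]

theorem toQuadraticForm'_transpose_mul_mul (M : Matrix m m R) (P : Matrix m n R) :
    (Pᵀ * M * P).toQuadraticForm' = M.toQuadraticForm'.comp (toLin' P) := by
  rw [toQuadraticForm', ← toLinearMap₂'_comp, LinearMap.BilinMap.toQuadraticMap_comp_same]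
  rfl

theorem toQuadraticForm'_apply (M : Matrix m m R) (x : m → R) :
    M.toQuadraticForm' x = x ⬝ᵥ M *ᵥ x := by
  simp [toQuadraticForm', toLinearMap₂'_apply']

theorem toQuadraticForm'_transpose (M : Matrix m m R) :
    Mᵀ.toQuadraticForm' = M.toQuadraticForm' := by
  ext x
  rw [toQuadraticForm'_apply, toQuadraticForm'_apply, mulVec_transpose, dotProduct_comm,
    dotProduct_mulVec]

theorem toQuadraticForm'_add (M N : Matrix m m R) :
    (M + N).toQuadraticForm' = M.toQuadraticForm' + N.toQuadraticForm' := by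
  simp only [toQuadraticForm', map_add, LinearMap.BilinMap.toQuadraticMap_add]

theorem toQuadraticForm'_smul (a : R) (M : Matrix m m R) :
    (a • M).toQuadraticForm' = a • M.toQuadraticForm' := by
  simp only [toQuadraticForm', map_smul, LinearMap.BilinMap.toQuadraticMap_smul]

theorem toMatrix'_toQuadraticForm' [Invertible (2 : R)] (M : Matrix m m R) :
    M.toQuadraticForm'.toMatrix' = ⅟(2 : R) • (M + Mᵀ) := by
  refine Matrix.ext fun i j => ?_
  simp [QuadraticForm.toMatrix', LinearMap.toMatrix₂'_apply, toQuadraticForm',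
    QuadraticMap.associated_toQuadraticMap, toLinearMap₂'_apply', mul_add]

theorem toQuadraticForm'_single_one (i j : m) :
    (single i j (1 : R)).toQuadraticForm' = QuadraticMap.proj i j := by
  ext x
  simp [toQuadraticForm'_apply, single_mulVec_eq, dotProduct, Pi.single_apply, mul_comm]

end Matrix

namespace QuadraticForm

variable {K L : Type*} [Field K] [Field L] [Invertible (2 : K)] {m n : ℕ} (σ : K →+* L)

theorem mapBase_eq (q : QuadraticForm K (Fin m → K)) :
    q.mapBase σ = (q.toMatrix'.map σ).toQuadraticForm' := rfl

theorem mapBase_add (q q' : QuadraticForm K (Fin m → K)) :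
    (q + q').mapBase σ = q.mapBase σ + q'.mapBase σ := by
  simp only [mapBase_eq, toMatrix', map_add, Matrix.map_add _ (map_add σ),
    Matrix.toQuadraticForm'_add]

theorem mapBase_toQuadraticForm' (M : Matrix (Fin m) (Fin m) K) :
    M.toQuadraticForm'.mapBase σ = (M.map σ).toQuadraticForm' := by
  have h : σ ⅟2 * 2 = 1 := by rw [← map_ofNat σ 2, ← map_mul, invOf_mul_self, map_one]
  rw [mapBase_eq, Matrix.toMatrix'_toQuadraticForm', Matrix.map_smul' _ _ _ (map_mul σ),
    Matrix.map_add _ (map_add σ), Matrix.transpose_map, Matrix.toQuadraticForm'_smul,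
    Matrix.toQuadraticForm'_add, Matrix.toQuadraticForm'_transpose, ← two_smul L, smul_smul, h,
    one_smul]

theorem mapBase_proj (i j : Fin m) :
    mapBase σ (QuadraticMap.proj (R := K) (A := K) i j) = QuadraticMap.proj i j := by
  rw [← Matrix.toQuadraticForm'_single_one, mapBase_toQuadraticForm', Matrix.map_single, map_one,
    Matrix.toQuadraticForm'_single_one]

omit [Invertible (2 : K)] in
theorem map_toMatrix'_funLeft (g : Fin m → Fin n) :
    (LinearMap.toMatrix' (LinearMap.funLeft K K g)).map σ
      = LinearMap.toMatrix' (LinearMap.funLeft L L g) := by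
  ext i j
  simp [LinearMap.toMatrix'_apply, Pi.single_apply, apply_ite σ]

theorem mapBase_comp_funLeft (q : QuadraticForm K (Fin m → K)) (g : Fin m → Fin n) :
    mapBase σ (q.comp (LinearMap.funLeft K K g)) =
      (q.mapBase σ).comp (LinearMap.funLeft L L g) := by
  rw [mapBase_eq, mapBase_eq, toMatrix'_comp, Matrix.map_mul, Matrix.map_mul,
    Matrix.transpose_map, map_toMatrix'_funLeft, Matrix.toQuadraticForm'_transpose_mul_mul,
    Matrix.toLin'_toMatrix']

end QuadraticForm

section

variable {K L : Type*} [Field K] [Field L] [Invertible (2 : K)] (σ : K →+* L)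

theorem mapBase_amerFormFst7 (q : QuadraticForm K (Fin 4 → K)) :
    (amerFormFst7 q).mapBase σ = amerFormFst7 (q.mapBase σ) := by
  rw [amerFormFst7, QuadraticForm.mapBase_add, QuadraticForm.mapBase_comp_funLeft,
    QuadraticForm.mapBase_proj, amerFormFst7]

theorem mapBase_amerFormSnd7 (q : QuadraticForm K (Fin 4 → K)) :
    (amerFormSnd7 q).mapBase σ = amerFormSnd7 (q.mapBase σ) := by
  rw [amerFormSnd7, QuadraticForm.mapBase_add, QuadraticForm.mapBase_comp_funLeft,
    QuadraticForm.mapBase_proj, amerFormSnd7]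

end

section

variable {F : Type*} [Field F]

theorem Submodule.exists_mem_ne_zero_apply_eq_zero_of_two_lt_finrank {ι : Type*} [Finite ι]
    {W : Submodule F (ι → F)} (hW : 2 < Module.finrank F W) (i j : ι) :
    ∃ x ∈ W, x ≠ 0 ∧ x i = 0 ∧ x j = 0 := by
  let f : W →ₗ[F] F × F :=
    ((LinearMap.proj i).comp W.subtype).prod ((LinearMap.proj j).comp W.subtype)
  have hker : LinearMap.ker f ≠ ⊥ :=
    LinearMap.ker_ne_bot_of_finrank_lt (by rwa [Module.finrank_prod, Module.finrank_self])
  obtain ⟨x, hx, hx0⟩ := Submodule.exists_mem_ne_zero_of_ne_bot hker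
  simp only [LinearMap.mem_ker, f, LinearMap.prod_apply, Function.prod, Prod.mk_eq_zero] at hx
  exact ⟨x, x.2, by simpa using hx0, hx⟩

theorem amerFormFst7_apply (q : QuadraticForm F (Fin 4 → F)) (x : Fin 7 → F) :
    amerFormFst7 q x = q (fun i => x (Fin.castLE (by omega) i)) + x 4 * x 5 := rfl

theorem amerFormSnd7_apply (q : QuadraticForm F (Fin 4 → F)) (x : Fin 7 → F) :
    amerFormSnd7 q x = q (fun i => x (Fin.castLE (by omega) i)) + x 4 * x 6 := rfl

theorem castLE_append {α : Type*} (a : Fin 4 → α) (b : Fin 3 → α) :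
    (fun i => (Fin.append a b : Fin 7 → α) (Fin.castLE (by omega) i)) = a :=
  funext (Fin.append_left a b)

theorem amerFormFst7_append (q : QuadraticForm F (Fin 4 → F)) (a : Fin 4 → F)
    (b : Fin 3 → F) :
    amerFormFst7 q (Fin.append a b) = q a + b 0 * b 1 := by
  rw [amerFormFst7_apply, castLE_append]; rfl

theorem amerFormSnd7_append (q : QuadraticForm F (Fin 4 → F)) (a : Fin 4 → F)
    (b : Fin 3 → F) :
    amerFormSnd7 q (Fin.append a b) = q a + b 0 * b 2 := by
  rw [amerFormSnd7_apply, castLE_append]; rfl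

theorem eq_zero_of_castLE_eq_zero {x : Fin 7 → F}
    (hx : (fun i : Fin 4 => x (Fin.castLE (by omega) i)) = 0)
    (h4 : x 4 = 0) (h5 : x 5 = 0) (h6 : x 6 = 0) : x = 0 := by
  funext k
  fin_cases k
  exacts [congrFun hx 0, congrFun hx 1, congrFun hx 2, congrFun hx 3, h4, h5, h6]

theorem not_bothVanishOnSubspace_amerForm (f g : QuadraticForm F (Fin 4 → F))
    (hfg : ¬ ∃ v : Fin 4 → F, v ≠ 0 ∧ f v = 0 ∧ g v = 0) :
    ¬ BothVanishOnSubspace (amerFormFst7 f) (amerFormSnd7 g) 3 := by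
  rintro ⟨W, hW, hvan⟩
  have hhead (x : Fin 7 → F) (hx : x ∈ W) (h4 : x 4 = 0) :
      (fun i : Fin 4 => x (Fin.castLE (by omega) i)) = 0 := by
    by_contra hne
    have hf := (hvan x hx).1
    have hg := (hvan x hx).2
    rw [amerFormFst7_apply, h4, zero_mul, add_zero] at hf
    rw [amerFormSnd7_apply, h4, zero_mul, add_zero] at hg
    exact hfg ⟨_, hne, hf, hg⟩
  obtain ⟨z, hzW, hz, hz4, hz6⟩ :=
    Submodule.exists_mem_ne_zero_apply_eq_zero_of_two_lt_finrank (W := W) (by omega) 4 6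
  obtain ⟨w, hwW, hw, hw5, hw6⟩ :=
    Submodule.exists_mem_ne_zero_apply_eq_zero_of_two_lt_finrank (W := W) (by omega) 5 6
  have hz5 : z 5 ≠ 0 := fun h5 => hz (eq_zero_of_castLE_eq_zero (hhead z hzW hz4) hz4 h5 hz6)
  have hw4 : w 4 ≠ 0 := fun h4 => hw (eq_zero_of_castLE_eq_zero (hhead w hwW h4) h4 hw5 hw6)
  have hadd : amerFormFst7 f (w + z) = amerFormFst7 f w + w 4 * z 5 := by
    have hzhead : ∀ i, z (Fin.castLE _ i) = 0 := congrFun (hhead z hzW hz4)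
    simp only [amerFormFst7_apply, Pi.add_apply, hzhead, hz4, add_zero]
    ring
  rw [(hvan _ (W.add_mem hwW hzW)).1, (hvan w hwW).1, zero_add] at hadd
  exact mul_ne_zero hw4 hz5 hadd.symm

theorem bothVanishOnSubspace_amerForm_of_common_zero (f g : QuadraticForm F (Fin 4 → F))
    {v : Fin 4 → F} (hv : v ≠ 0) (hf : f v = 0) (hg : g v = 0) :
    BothVanishOnSubspace (amerFormFst7 f) (amerFormSnd7 g) 3 := by
  let b : Fin 3 → Fin 7 → F := ![Fin.append v (0 : Fin 3 → F), Pi.single 5 1, Pi.single 6 1]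
  have hcomb (c : Fin 3 → F) : ∑ k, c k • b k = Fin.append (c 0 • v) ![0, c 1, c 2] := by
    funext k
    fin_cases k <;> simp [b, Fin.sum_univ_three, Fin.append, Fin.addCases]
  have hb : LinearIndependent F b := by
    refine Fintype.linearIndependent_iff.2 fun c hc => ?_
    rw [hcomb] at hc
    have h0 : c 0 • v = 0 := by rw [← castLE_append (c 0 • v) ![0, c 1, c 2], hc]; rfl
    intro k
    fin_cases k
    exacts [(smul_eq_zero.1 h0).resolve_right hv, congrFun hc 5, congrFun hc 6]
  refine ⟨Submodule.span F (Set.range b), by simp [finrank_span_eq_card hb], fun x hx => ?_⟩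
  obtain ⟨c, rfl⟩ := (Submodule.mem_span_range_iff_exists_fun F).1 hx
  rw [hcomb, amerFormFst7_append, amerFormSnd7_append, QuadraticMap.map_smul,
    QuadraticMap.map_smul, hf, hg]
  simp

end

/-- If `q1`, `q2` are quadratic forms on `ℚ^4` with a common nontrivial zero over every
`ℚ_p` and over `ℝ`, but with no common nontrivial zero over `ℚ`, then the forms
`Q1 = q1(x1,…,x4) + x5 x6` and `Q2 = q2(x1,…,x4) + x5 x7` on `7` variables vanish on a
common `3`-dimensional subspace over every `ℚ_p` and over `ℝ`, but not over `ℚ`: the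
local-global principle fails for `3`-dimensional vanishing subspaces. -/
theorem amer_local_global_failure_seven (q1 q2 : QuadraticForm ℚ (Fin 4 → ℚ))
    (hp : ∀ (p : ℕ) [Fact p.Prime], ∃ v : Fin 4 → ℚ_[p], v ≠ 0 ∧
      (q1.mapBase (algebraMap ℚ ℚ_[p])) v = 0 ∧ (q2.mapBase (algebraMap ℚ ℚ_[p])) v = 0)
    (hr : ∃ v : Fin 4 → ℝ, v ≠ 0 ∧
      (q1.mapBase (algebraMap ℚ ℝ)) v = 0 ∧ (q2.mapBase (algebraMap ℚ ℝ)) v = 0)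
    (hq : ¬ ∃ v : Fin 4 → ℚ, v ≠ 0 ∧ q1 v = 0 ∧ q2 v = 0) :
    (∀ (p : ℕ) [Fact p.Prime],
      BothVanishOnSubspace ((amerFormFst7 q1).mapBase (algebraMap ℚ ℚ_[p]))
        ((amerFormSnd7 q2).mapBase (algebraMap ℚ ℚ_[p])) 3) ∧
    BothVanishOnSubspace ((amerFormFst7 q1).mapBase (algebraMap ℚ ℝ))
      ((amerFormSnd7 q2).mapBase (algebraMap ℚ ℝ)) 3 ∧
    ¬ BothVanishOnSubspace (amerFormFst7 q1) (amerFormSnd7 q2) 3 := by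
  refine ⟨fun p _ => ?_, ?_, not_bothVanishOnSubspace_amerForm q1 q2 hq⟩
  · obtain ⟨v, hv, h1, h2⟩ := hp p
    rw [mapBase_amerFormFst7, mapBase_amerFormSnd7]
    exact bothVanishOnSubspace_amerForm_of_common_zero _ _ hv h1 h2
  · obtain ⟨v, hv, h1, h2⟩ := hr
    rw [mapBase_amerFormFst7, mapBase_amerFormSnd7]
    exact bothVanishOnSubspace_amerForm_of_common_zero _ _ hv h1 h2
end
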